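/- Let F be a field with char F ≠ 2, δ ∈ F with δ ≠ ±1, and suppose x² − 2δx + 1 has its roots in F. Let s, t ∈ V be elements spanning the two 1-dimensional nilpotent subalgebras of 𝔖(δ) (so s·s = 0 = t·t), scaled so that b(s,t) = 1/8. Then an element w ∈ 𝔖(δ) satisfies w·w = w if and only if w = 0, or w = 1, or w = ξs + (1/2)·1 + ξ⁻¹t for some ξ ∈ F \ {0}. -/

import Mathlib

namespace JordanHalf

variable {F : Type*} [Field F]

/-- The multiplication of the spin factor `𝔖(δ)` with respect to the basis
`1 = ![1,0,0]`, `u = ![0,1,0]`, `v = ![0,0,1]`, where the bilinear form on `V = ⟨u,v⟩`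
satisfies `b(u,u) = 1 = b(v,v)` and `b(u,v) = δ`. -/
def SmulFun (δ : F) (x y : Fin 3 → F) : Fin 3 → F :=
  ![x 0 * y 0 + x 1 * y 1 + x 2 * y 2 + δ * (x 1 * y 2 + x 2 * y 1),
    x 0 * y 1 + y 0 * x 1,
    x 0 * y 2 + y 0 * x 2]

end JordanHalf

/-! Write `w = α·1 + v` with `v ∈ V`. Then `w·w = (α² + b(v,v))·1 + 2αv`, so `w` is idempotent
iff either `v = 0` and `α ∈ {0, 1}`, or `α = 1/2` and `b(v,v) = 1/4`; here `b(v,v)` is the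
`0`-component of `SmulFun δ v v`. As `s` and `t` are isotropic and span `V`,
`b(as + ct, as + ct) = 2ac·b(s,t) = ac/4`, so the second case says exactly `c = a⁻¹`. -/

namespace JordanHalf

variable {F : Type*} [Field F]

theorem smulFun_smul_one_add_self (δ α : F) {v : Fin 3 → F} (hv : v 0 = 0) :
    SmulFun δ (α • ![1, 0, 0] + v) (α • ![1, 0, 0] + v) =
      (α ^ 2 + SmulFun δ v v 0) • ![1, 0, 0] + (2 * α) • v := by
  ext i; fin_cases i <;> simp [SmulFun, hv] <;> ring

theorem smul_one_add_eq_smul_one_add_iff {α β : F} {v w : Fin 3 → F} (hv : v 0 = 0)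
    (hw : w 0 = 0) :
    α • ![1, 0, 0] + v = β • ![1, 0, 0] + w ↔ α = β ∧ v = w := by
  refine ⟨fun h ↦ ?_, by rintro ⟨rfl, rfl⟩; rfl⟩
  obtain rfl : α = β := by simpa [hv, hw] using congrFun h 0
  exact ⟨rfl, add_left_cancel h⟩

theorem smulFun_smul_one_add_self_eq_self_iff (h2 : (2 : F) ≠ 0) (δ α : F) {v : Fin 3 → F}
    (hv : v 0 = 0) :
    SmulFun δ (α • ![1, 0, 0] + v) (α • ![1, 0, 0] + v) = α • ![1, 0, 0] + v ↔
      (v = 0 ∧ (α = 0 ∨ α = 1)) ∨ (α = 2⁻¹ ∧ 4 * SmulFun δ v v 0 = 1) := by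
  have hvv : (2 * α) • v = v ↔ 2 * α = 1 ∨ v = 0 := by
    rw [← sub_eq_zero, ← sub_eq_zero (a := 2 * α), ← smul_eq_zero, sub_smul, one_smul]
  rw [smulFun_smul_one_add_self δ α hv, smul_one_add_eq_smul_one_add_iff (by simp [hv]) hv, hvv]
  constructor
  · rintro ⟨hα, hhalf | rfl⟩
    · refine Or.inr ⟨eq_inv_of_mul_eq_one_right hhalf, ?_⟩
      linear_combination 4 * hα - (2 * α - 1) * hhalf
    · refine Or.inl ⟨rfl, eq_zero_or_one_of_sq_eq_self ?_⟩
      simpa [SmulFun] using hα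
  · rintro (⟨rfl, rfl | rfl⟩ | ⟨rfl, hβ⟩)
    · simp [SmulFun]
    · simp [SmulFun]
    · refine ⟨?_, Or.inl (mul_inv_cancel₀ h2)⟩
      field_simp
      linear_combination hβ

theorem smulFun_smul_add_smul_self_zero {δ : F} {s t : Fin 3 → F} (hs : SmulFun δ s s 0 = 0)
    (ht : SmulFun δ t t 0 = 0) (a c : F) :
    SmulFun δ (a • s + c • t) (a • s + c • t) 0 = 2 * a * c * SmulFun δ s t 0 := by
  simp only [SmulFun, Matrix.cons_val_zero, Pi.add_apply, Pi.smul_apply, smul_eq_mul] at *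
  linear_combination a ^ 2 * hs + c ^ 2 * ht

theorem exists_eq_smul_add_smul {s t v : Fin 3 → F} (hind : LinearIndependent F ![s, t])
    (hs : s 0 = 0) (ht : t 0 = 0) (hv : v 0 = 0) : ∃ a c : F, v = a • s + c • t := by
  set V := LinearMap.ker (LinearMap.proj 0 : (Fin 3 → F) →ₗ[F] F)
  have hV : Module.finrank F V = 2 := by
    have := Module.Dual.finrank_ker_add_one_of_ne_zero
      (f := (LinearMap.proj 0 : (Fin 3 → F) →ₗ[F] F))
      (fun h ↦ by simpa using LinearMap.congr_fun h (Pi.single 0 1))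
    rw [Module.finrank_fin_fun] at this
    exact Nat.add_right_cancel this
  have hspan : Submodule.span F {s, t} = V := by
    refine Submodule.eq_of_le_of_finrank_eq ?_ ?_
    · rw [Submodule.span_le]
      rintro x (rfl | rfl) <;> simpa [V]
    · rw [hV, ← Matrix.range_cons_cons_empty s t ![], finrank_span_eq_card hind,
        Fintype.card_fin]
  obtain ⟨a, c, h⟩ := Submodule.mem_span_pair.1 (hspan ▸ (show v ∈ V from hv))
  exact ⟨a, c, h.symm⟩

end JordanHalf

open JordanHalf

theorem spin_idempotents_general {F : Type*} [Field F] (hchar : (2 : F) ≠ 0) (δ : F)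
    (s t : Fin 3 → F) (hs0 : s 0 = 0) (ht0 : t 0 = 0)
    (hss : SmulFun δ s s = 0) (htt : SmulFun δ t t = 0)
    (hind : LinearIndependent F ![s, t])
    (hst : SmulFun δ s t 0 = (8⁻¹ : F)) :
    ∀ w : Fin 3 → F, SmulFun δ w w = w ↔
      w = 0 ∨ w = ![1, 0, 0] ∨
        ∃ ξ : F, ξ ≠ 0 ∧ w = ξ • s + (2⁻¹ : F) • ![1, 0, 0] + ξ⁻¹ • t := by
  have h8 : (8 : F) ≠ 0 := by simpa [show (8 : F) = 2 ^ 3 by norm_num] using pow_ne_zero 3 hchar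
  have hnull (a c : F) : 4 * SmulFun δ (a • s + c • t) (a • s + c • t) 0 = a * c := by
    rw [smulFun_smul_add_smul_self_zero (congrFun hss 0) (congrFun htt 0), hst]
    field_simp
    ring
  intro w
  constructor
  · intro hw
    obtain ⟨α, v, hv, rfl⟩ : ∃ α v, v 0 = 0 ∧ w = α • ![1, 0, 0] + v :=
      ⟨w 0, w - w 0 • ![1, 0, 0], by simp, by abel⟩
    rcases (smulFun_smul_one_add_self_eq_self_iff hchar δ α hv).1 hw with
      ⟨rfl, rfl | rfl⟩ | ⟨rfl, hb⟩
    · simp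
    · simp
    · obtain ⟨a, c, rfl⟩ := exists_eq_smul_add_smul hind hs0 ht0 hv
      rw [hnull] at hb
      refine Or.inr (Or.inr ⟨a, left_ne_zero_of_mul_eq_one hb, ?_⟩)
      rw [eq_inv_of_mul_eq_one_right hb]
      abel
  · rintro (rfl | rfl | ⟨ξ, hξ, rfl⟩)
    · ext i; fin_cases i <;> simp [SmulFun]
    · ext i; fin_cases i <;> simp [SmulFun]
    · rw [add_comm (ξ • s), add_assoc,
        smulFun_smul_one_add_self_eq_self_iff hchar δ _ (by simp [hs0, ht0]), hnull,
        mul_inv_cancel₀ hξ]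
      exact Or.inr ⟨rfl, rfl⟩

/-- **Lemma (nilpotent basis, part (b)).** Suppose `char F ≠ 2`, `δ ≠ ±1`, and
`x² − 2δx + 1` has its roots in `F`.  Let `s, t ∈ V` span the two 1-dimensional
nilpotent subalgebras of `𝔖(δ)` (so `s⬝s = 0 = t⬝t`), scaled so that `b(s,t) = 1/8`
(for `s, t ∈ V` the value `b(s,t)` is the identity component of `s⬝t`).  Then the
idempotents of `𝔖(δ)` are exactly `0`, `1` and the elements `ξs + ½·1 + ξ⁻¹t`,
`ξ ∈ F \ {0}`. -/
theorem spin_idempotents {F : Type*} [Field F] (hchar : (2 : F) ≠ 0) (δ : F)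
    (hδ1 : δ ≠ 1) (hδ2 : δ ≠ -1) (hroot : ∃ ζ : F, ζ ^ 2 - 2 * δ * ζ + 1 = 0)
    (s t : Fin 3 → F) (hs0 : s 0 = 0) (ht0 : t 0 = 0)
    (hss : SmulFun δ s s = 0) (htt : SmulFun δ t t = 0)
    (hind : LinearIndependent F ![s, t])
    (hst : SmulFun δ s t 0 = (8⁻¹ : F)) :
    ∀ w : Fin 3 → F, SmulFun δ w w = w ↔
      w = 0 ∨ w = ![1, 0, 0] ∨
        ∃ ξ : F, ξ ≠ 0 ∧ w = ξ • s + (2⁻¹ : F) • ![1, 0, 0] + ξ⁻¹ • t :=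
  spin_idempotents_general hchar δ s t hs0 ht0 hss htt hind hst
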